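/- arXiv:2406.14998 — 3 statements merged into one kernel-verified Lean document; each statement's English description precedes it below -/
import Mathlib

section
/- Let k > 0 and let R, R_a : ℝ → M₃(ℝ) be differentiable curves with R(t), R_a(t) ∈ SO(3) for all t. Set R_e(t) := R_a(t)ᵀ R(t) and suppose R satisfies the closed-loop attitude control law R′(t) = R(t)·( −k·Log(R_e(t)) + R(t)ᵀ R_a′(t) R_a(t)ᵀ R(t) ) for all t. If tr(R_e(t₀)) ≠ −1 at some time t₀, then tr(R_e(t)) ≠ −1 for all t ≥ t₀ and the rotation-angle error decays exponentially: θ(R_e(t)) = θ(R_e(t₀))·e^{−k(t−t₀)} for all t ≥ t₀; in particular R(t) tracks R_a(t) exponentially fast. -/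
/-!
Along the closed loop the feed-forward term cancels against the skew-symmetric matrix `Raᵀ Ra'`,
so `d/dt tr Re = −k tr (Re Log Re) = 2 k θ sin θ`. As `cos θ = (tr Re − 1)/2`, this says
`θ' = −k θ` wherever `0 < θ < π`. The trace is nondecreasing, so it never returns to `−1`, and
`θ` cannot reach `0` in finite time: up to its first zero it equals `θ(t₀) e^{−k(t−t₀)} > 0`.
-/

open Matrix Real

/-- `SO3 R` means `R` is a rotation matrix: `Rᵀ R = I` and `det R = 1`. -/
def SO3 (R : Matrix (Fin 3) (Fin 3) ℝ) : Prop := Rᵀ * R = 1 ∧ R.det = 1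

/-- The rotation angle `θ(R) = arccos((tr R − 1)/2)` of a rotation matrix. -/
noncomputable def rotAngle (R : Matrix (Fin 3) (Fin 3) ℝ) : ℝ :=
  Real.arccos ((R.trace - 1) / 2)

/-- The principal logarithm on SO(3): `Log I = 0` and
`Log R = (θ/(2 sin θ))·(R − Rᵀ)` for `R ≠ I` with `θ = rotAngle R`. -/
noncomputable def SO3Log (R : Matrix (Fin 3) (Fin 3) ℝ) : Matrix (Fin 3) (Fin 3) ℝ :=
  if R = 1 then 0 else (rotAngle R / (2 * Real.sin (rotAngle R))) • (R - Rᵀ)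

open Set

lemma Matrix.trace_mul_self_le_trace_transpose_mul_self {n : Type*} [Fintype n]
    (A : Matrix n n ℝ) : (A * A).trace ≤ (Aᵀ * A).trace := by
  have hsq := (posSemidef_conjTranspose_mul_self (A - Aᵀ)).trace_nonneg
  rw [conjTranspose_eq_transpose_of_trivial] at hsq
  have hexpand : ((A - Aᵀ)ᵀ * (A - Aᵀ)).trace = 2 * (Aᵀ * A).trace - 2 * (A * A).trace := by
    simp only [transpose_sub, transpose_transpose, sub_mul, mul_sub, trace_sub]
    rw [← Matrix.transpose_mul, trace_transpose, trace_mul_comm A Aᵀ]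
    ring
  linarith

namespace SO3

variable {A B : Matrix (Fin 3) (Fin 3) ℝ}

lemma mul_transpose_self (h : SO3 A) : A * Aᵀ = 1 := mul_eq_one_comm.mp h.1

lemma transpose_mul (hA : SO3 A) (hB : SO3 B) : SO3 (Aᵀ * B) :=
  ⟨by rw [Matrix.transpose_mul, transpose_transpose, Matrix.mul_assoc, ← Matrix.mul_assoc A,
      hA.mul_transpose_self, Matrix.one_mul, hB.1],
    by rw [det_mul, det_transpose, hA.2, hB.2, one_mul]⟩

lemma adjugate_eq_transpose (h : SO3 A) : adjugate A = Aᵀ :=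
  calc adjugate A = Aᵀ * A * adjugate A := by rw [h.1, Matrix.one_mul]
    _ = Aᵀ := by rw [Matrix.mul_assoc, mul_adjugate, h.2, one_smul, Matrix.mul_one]

/-- Compare traces in `adj A = Aᵀ`: for `3 × 3` matrices `2 tr (adj A) = (tr A)² − tr (A²)`. -/
lemma trace_mul_self (h : SO3 A) : (A * A).trace = A.trace ^ 2 - 2 * A.trace := by
  have htr := congrArg trace h.adjugate_eq_transpose
  rw [adjugate_fin_three, trace_transpose] at htr
  simp only [trace_fin_three, mul_apply, Fin.sum_univ_three, of_apply, cons_val', cons_val_zero,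
    cons_val_one, cons_val_two, empty_val', cons_val_fin_one, head_cons, head_fin_const,
    tail_cons] at htr ⊢
  linear_combination (-2 : ℝ) * htr

lemma trace_mem_Icc (h : SO3 A) : A.trace ∈ Icc (-1) 3 := by
  have h3 : (A * A).trace ≤ 3 := by
    simpa [h.1] using trace_mul_self_le_trace_transpose_mul_self A
  rw [h.trace_mul_self] at h3
  constructor <;> nlinarith

lemma cos_rotAngle (h : SO3 A) : cos (rotAngle A) = (A.trace - 1) / 2 := by
  obtain ⟨hlo, hhi⟩ := h.trace_mem_Icc
  exact cos_arccos (by linarith) (by linarith)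

lemma trace_mul_SO3Log (h : SO3 A) :
    (A * SO3Log A).trace = -2 * rotAngle A * sin (rotAngle A) := by
  have hpyth := sin_sq_add_cos_sq (rotAngle A)
  rw [h.cos_rotAngle] at hpyth
  unfold SO3Log
  split_ifs with hA
  · subst hA
    norm_num [rotAngle]
  · rw [Matrix.mul_smul, trace_smul, Matrix.mul_sub, trace_sub, h.mul_transpose_self,
      h.trace_mul_self, trace_one, Fintype.card_fin, smul_eq_mul]
    rcases eq_or_ne (sin (rotAngle A)) 0 with hs | hs
    · simp [hs]
    · field_simp
      linear_combination (4 * rotAngle A) * hpyth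

end SO3

section MatrixDerivative

variable {m n p : Type*} [Fintype n] {t : ℝ}

lemma hasDerivAt_mul_apply {A : ℝ → Matrix m n ℝ} {B : ℝ → Matrix n p ℝ}
    {A' : Matrix m n ℝ} {B' : Matrix n p ℝ}
    (hA : ∀ i j, HasDerivAt (fun s => A s i j) (A' i j) t)
    (hB : ∀ i j, HasDerivAt (fun s => B s i j) (B' i j) t) (i : m) (j : p) :
    HasDerivAt (fun s => (A s * B s) i j) ((A' * B t + A t * B') i j) t := by
  simp only [mul_apply]
  refine (HasDerivAt.fun_sum fun l _ => (hA i l).mul (hB l j)).congr_deriv ?_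
  simp only [Matrix.add_apply, mul_apply, Finset.sum_add_distrib]

lemma hasDerivAt_trace_transpose_mul {A B : ℝ → Matrix n n ℝ} {A' B' : Matrix n n ℝ}
    (hA : ∀ i j, HasDerivAt (fun s => A s i j) (A' i j) t)
    (hB : ∀ i j, HasDerivAt (fun s => B s i j) (B' i j) t) :
    HasDerivAt (fun s => ((A s)ᵀ * B s).trace) ((A'ᵀ * B t + (A t)ᵀ * B').trace) t :=
  HasDerivAt.fun_sum fun i _ => hasDerivAt_mul_apply (fun i j => hA j i) hB i i

lemma transpose_mul_add_transpose_mul_eq_zero_of_orthogonal [DecidableEq n]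
    {A : ℝ → Matrix n n ℝ} {A' : Matrix n n ℝ}
    (hA : ∀ i j, HasDerivAt (fun s => A s i j) (A' i j) t)
    (horth : ∀ s, (A s)ᵀ * A s = 1) :
    A'ᵀ * A t + (A t)ᵀ * A' = 0 := by
  refine Matrix.ext fun i j => ?_
  have hderiv :=
    hasDerivAt_mul_apply (A := fun s => (A s)ᵀ) (A' := A'ᵀ) (fun i j => hA j i) hA i j
  simp only [horth] at hderiv
  exact hderiv.unique (hasDerivAt_const t _)

end MatrixDerivative

lemma trace_error_deriv_eq {k : ℝ} {R Ra R' Ra' Re : Matrix (Fin 3) (Fin 3) ℝ}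
    (hR : SO3 R) (hRa : SO3 Ra) (hRe : Re = Raᵀ * R) (hskew : Ra'ᵀ * Ra + Raᵀ * Ra' = 0)
    (hctrl : R' = R * ((-k) • SO3Log Re + Rᵀ * Ra' * Raᵀ * R)) :
    (Ra'ᵀ * R + Raᵀ * R').trace = 2 * k * rotAngle Re * sin (rotAngle Re) := by
  have hfeed : Ra'ᵀ * R = Ra'ᵀ * Ra * Re := by
    rw [hRe, Matrix.mul_assoc, ← Matrix.mul_assoc Ra, hRa.mul_transpose_self, Matrix.one_mul]
  have hcancel : Raᵀ * (R * (Rᵀ * Ra' * Raᵀ * R)) = Raᵀ * Ra' * Re := by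
    simp only [hRe, ← Matrix.mul_assoc, hR.mul_transpose_self, Matrix.mul_one]
  have hsplit :
      Ra'ᵀ * R + Raᵀ * R' = (-k) • (Re * SO3Log Re) + (Ra'ᵀ * Ra + Raᵀ * Ra') * Re := by
    rw [hctrl, Matrix.mul_add, Matrix.mul_add, hcancel, hfeed, Matrix.mul_smul, Matrix.mul_smul,
      ← Matrix.mul_assoc, ← hRe, Matrix.add_mul]
    abel
  rw [hsplit, hskew, Matrix.zero_mul, add_zero, trace_smul,
    (hRe ▸ hRa.transpose_mul hR : SO3 Re).trace_mul_SO3Log, smul_eq_mul]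
  ring

lemma hasDerivAt_arccos_of_hasDerivAt_eq_mul_sin {u : ℝ → ℝ} {c t : ℝ}
    (hu : HasDerivAt u (c * sin (arccos (u t))) t) (h₁ : -1 < u t) (h₂ : u t < 1) :
    HasDerivAt (fun s => arccos (u s)) (-c) t := by
  have hsin : 0 < sin (arccos (u t)) :=
    sin_pos_of_pos_of_lt_pi (arccos_pos.2 h₂) (arccos_lt_pi.2 h₁)
  refine ((hasDerivAt_arccos h₁.ne' h₂.ne).comp t hu).congr_deriv ?_
  rw [sin_arccos] at hsin ⊢
  field_simp

lemma eq_mul_exp_of_hasDerivAt_Ico {θ : ℝ → ℝ} {k a b : ℝ} (hab : a ≤ b)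
    (hθ : ContinuousOn θ (Icc a b)) (hderiv : ∀ t ∈ Ico a b, HasDerivAt θ (-k * θ t) t) :
    θ b = θ a * exp (-k * (b - a)) := by
  have hexp : ∀ t, HasDerivAt (fun s => exp (k * (s - a))) (k * exp (k * (t - a))) t := by
    intro t
    convert (((hasDerivAt_id' t).sub_const a).const_mul k).exp using 1
    ring
  have hconst := constant_of_has_deriv_right_zero (f := fun s => θ s * exp (k * (s - a)))
    (hθ.mul (continuous_exp.comp (by fun_prop)).continuousOn)
    (fun t ht => ((hderiv t ht).mul (hexp t)).hasDerivWithinAt.congr_deriv (by ring)) b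
    (right_mem_Icc.2 hab)
  simp only [sub_self, mul_zero, exp_zero, mul_one] at hconst
  rw [show -k * (b - a) = -(k * (b - a)) by ring, Real.exp_neg, ← hconst,
    mul_inv_cancel_right₀ (exp_ne_zero _)]

lemma eq_mul_exp_of_hasDerivAt_of_pos {θ : ℝ → ℝ} {k a b : ℝ} (hab : a ≤ b)
    (hθ : Continuous θ) (hderiv : ∀ t, a ≤ t → 0 < θ t → HasDerivAt θ (-k * θ t) t)
    (ha : 0 < θ a) : θ b = θ a * exp (-k * (b - a)) := by
  suffices hpos : ∀ s ∈ Ico a b, 0 < θ s from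
    eq_mul_exp_of_hasDerivAt_Ico hab hθ.continuousOn fun s hs => hderiv s hs.1 (hpos s hs)
  -- at the first zero `T` of `θ` in `[a, b]` the linear ODE on `[a, T)` gives `θ T > 0`
  by_contra! hneg
  obtain ⟨s, hs, hθs⟩ := hneg
  set Z := Icc a b ∩ {s | θ s ≤ 0}
  have hbdd : BddBelow Z := ⟨a, fun _ hz => hz.1.1⟩
  have hT : sInf Z ∈ Z :=
    (isClosed_Icc.inter (isClosed_le hθ continuous_const)).csInf_mem
      ⟨s, ⟨Ico_subset_Icc_self hs, hθs⟩⟩ hbdd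
  have hθT := eq_mul_exp_of_hasDerivAt_Ico hT.1.1 hθ.continuousOn fun r hr =>
    hderiv r hr.1 (not_le.1 fun hθr =>
      hr.2.not_ge (csInf_le hbdd ⟨⟨hr.1, hr.2.le.trans hT.1.2⟩, hθr⟩))
  have hθT_nonpos : θ (sInf Z) ≤ 0 := hT.2
  rw [hθT] at hθT_nonpos
  exact hθT_nonpos.not_gt (mul_pos ha (exp_pos _))

lemma arccos_eq_mul_exp_of_hasDerivAt {u : ℝ → ℝ} {k t₀ t : ℝ} (hk : 0 ≤ k)
    (hu : ∀ t, HasDerivAt u (k * arccos (u t) * sin (arccos (u t))) t) (h₀ : -1 < u t₀)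
    (ht : t₀ ≤ t) : -1 < u t ∧ arccos (u t) = arccos (u t₀) * exp (-k * (t - t₀)) := by
  have hmono : Monotone u := by
    refine monotone_of_deriv_nonneg (fun t => (hu t).differentiableAt) fun t => ?_
    rw [(hu t).deriv]
    have hθ := arccos_nonneg (u t)
    have hsin := sin_nonneg_of_nonneg_of_le_pi hθ (arccos_le_pi _)
    positivity
  have hgt : ∀ s, t₀ ≤ s → -1 < u s := fun s hs => h₀.trans_le (hmono hs)
  refine ⟨hgt t ht, ?_⟩
  rcases (arccos_nonneg (u t₀)).eq_or_lt with hzero | hpos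
  · rw [← hzero, zero_mul, arccos_eq_zero]
    exact (arccos_eq_zero.1 hzero.symm).trans (hmono ht)
  · refine eq_mul_exp_of_hasDerivAt_of_pos ht
      (continuous_arccos.comp (continuous_iff_continuousAt.2 fun s => (hu s).continuousAt))
      (fun s hs hθ => ?_) hpos
    rw [neg_mul]
    exact hasDerivAt_arccos_of_hasDerivAt_eq_mul_sin (hu s) (hgt s hs) (arccos_pos.1 hθ)


/-- Exponential tracking of a time-varying attitude target under the geometric
control law `Ω = −k Log(R_e) + Ad_{R_eᵀ}(Ω_a)`: if `tr(R_e(t₀)) ≠ −1`, then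
`tr(R_e(t)) ≠ −1` for all `t ≥ t₀` and
`θ(R_e(t)) = θ(R_e(t₀)) e^{−k(t−t₀)}`. -/
theorem stmt2 (k : ℝ) (hk : 0 < k)
    (R Ra R' Ra' : ℝ → Matrix (Fin 3) (Fin 3) ℝ)
    (hRSO3 : ∀ t, SO3 (R t)) (hRaSO3 : ∀ t, SO3 (Ra t))
    (hR : ∀ t, ∀ i j, HasDerivAt (fun s => R s i j) (R' t i j) t)
    (hRa : ∀ t, ∀ i j, HasDerivAt (fun s => Ra s i j) (Ra' t i j) t)
    (Re : ℝ → Matrix (Fin 3) (Fin 3) ℝ) (hRe : ∀ t, Re t = (Ra t)ᵀ * R t)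
    (hctrl : ∀ t, R' t =
      R t * ((-k) • SO3Log (Re t) + (R t)ᵀ * Ra' t * (Ra t)ᵀ * R t))
    (t₀ : ℝ) (h0 : (Re t₀).trace ≠ -1) :
    ∀ t, t₀ ≤ t → (Re t).trace ≠ -1 ∧
      rotAngle (Re t) = rotAngle (Re t₀) * Real.exp (-k * (t - t₀)) := by
  have hcos : ∀ t, HasDerivAt (fun s => ((Re s).trace - 1) / 2)
      (k * rotAngle (Re t) * sin (rotAngle (Re t))) t := by
    intro t
    have htr := hasDerivAt_trace_transpose_mul (hRa t) (hR t)
    have hskew := transpose_mul_add_transpose_mul_eq_zero_of_orthogonal (hRa t) fun s =>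
      (hRaSO3 s).1
    rw [trace_error_deriv_eq (hRSO3 t) (hRaSO3 t) (hRe t) hskew (hctrl t)] at htr
    simp only [← hRe] at htr
    exact ((htr.sub_const 1).div_const 2).congr_deriv (by ring)
  have hmem := (hRe t₀ ▸ (hRaSO3 t₀).transpose_mul (hRSO3 t₀)).trace_mem_Icc
  intro t ht
  obtain ⟨hgt, hangle⟩ := arccos_eq_mul_exp_of_hasDerivAt hk.le hcos
    (by have := hmem.1.lt_of_ne' h0; linarith) ht
  exact ⟨fun h => by rw [h] at hgt; norm_num at hgt, hangle⟩
end

section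
/- (2D unicycles aligning with a common vector field) Let k > 0 and let θ_i, θ_j : [0,∞) → ℝ be differentiable heading angles whose difference satisfies (θ_j − θ_i)′(t) = −k·(θ_j(t) − θ_i(t)) for all t ≥ 0. Then θ_j(t) − θ_i(t) = (θ_j(0) − θ_i(0))·e^{−k t}, so the heading error converges globally to zero exponentially fast. Moreover, if |θ_j(0) − θ_i(0)| ≤ 2π and p_i, p_j : [0,∞) → ℝ² satisfy p_i′(t) = (cos θ_i(t), sin θ_i(t)) and p_j′(t) = (cos θ_j(t), sin θ_j(t)), then the relative position p_{ij} := p_i − p_j satisfies ‖p_{ij}(t) − p_{ij}(0)‖ ≤ 2π/k for all t ≥ 0. -/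
/-!
The heading difference `δ = θj - θi` solves the linear ODE `δ' = -k δ`, so
`e^{k t} δ(t)` has zero derivative and `δ(t) = δ(0) e^{-k t}`. The relative velocity
`p_{ij}'` is the difference of two unit vectors at angle `δ`, whose length (a chord)
is at most the arc `|δ(t)| = |δ(0)| e^{-k t}`; integrating this bound gives
`‖p_{ij}(t) - p_{ij}(0)‖ ≤ |δ(0)| / k ≤ 2π / k`.
-/

open Real

noncomputable def headingVector (θ : ℝ) : EuclideanSpace ℝ (Fin 2) :=
  WithLp.toLp 2 ![cos θ, sin θ]

lemma norm_headingVector_sub_sq (a b : ℝ) :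
    ‖headingVector a - headingVector b‖ ^ 2 = 2 - 2 * cos (a - b) := by
  simp only [EuclideanSpace.norm_sq_eq, Fin.sum_univ_two, headingVector, PiLp.sub_apply,
    Matrix.cons_val_zero, Matrix.cons_val_one, Real.norm_eq_abs, sq_abs, cos_sub]
  linear_combination sin_sq_add_cos_sq a + sin_sq_add_cos_sq b

lemma norm_headingVector_sub_le (a b : ℝ) : ‖headingVector a - headingVector b‖ ≤ |a - b| := by
  have hsq : ‖headingVector a - headingVector b‖ ^ 2 ≤ (a - b) ^ 2 := by
    rw [norm_headingVector_sub_sq]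
    linarith [one_sub_sq_div_two_le_cos (x := a - b)]
  simpa only [abs_norm] using sq_le_sq.mp hsq

theorem eq_exp_mul_smul_of_hasDerivAt {E : Type*} [NormedAddCommGroup E] [NormedSpace ℝ E]
    {f : ℝ → E} {c : ℝ} (hf : ∀ t, 0 ≤ t → HasDerivAt f (c • f t) t) {t : ℝ} (ht : 0 ≤ t) :
    f t = exp (c * t) • f 0 := by
  have hderiv : ∀ s, 0 ≤ s → HasDerivAt (fun s => exp (-c * s) • f s) 0 s := by
    intro s hs
    have hexp : HasDerivAt (fun s => exp (-c * s)) (exp (-c * s) * -c) s := by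
      simpa using ((hasDerivAt_id s).const_mul (-c)).exp
    refine (hexp.smul (hf s hs)).congr_deriv ?_
    rw [smul_smul, ← add_smul]
    ring_nf
    simp
  have hconst := constant_of_has_deriv_right_zero
    (fun s hs => (hderiv s hs.1).continuousAt.continuousWithinAt)
    (fun s hs => (hderiv s hs.1).hasDerivWithinAt) t ⟨ht, le_rfl⟩
  simp only [mul_zero, exp_zero, one_smul] at hconst
  rw [← hconst, smul_smul, ← exp_add]
  simp

theorem norm_sub_le_of_norm_deriv_le_mul_exp_neg {E : Type*} [NormedAddCommGroup E]
    [NormedSpace ℝ E] {f f' : ℝ → E} {C k : ℝ} (hk : 0 < k)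
    (hf : ∀ t, 0 ≤ t → HasDerivAt f (f' t) t) (bound : ∀ t, 0 ≤ t → ‖f' t‖ ≤ C * exp (-k * t))
    {t : ℝ} (ht : 0 ≤ t) : ‖f t - f 0‖ ≤ C / k := by
  have hC : 0 ≤ C := by simpa using (norm_nonneg _).trans (bound 0 le_rfl)
  -- Comparison function `B` with `B 0 = 0` and `B' = C e^{-k t}`; no integrability is needed.
  have hB : ∀ s, HasDerivAt (fun s => C / k * (1 - exp (-k * s))) (C * exp (-k * s)) s := by
    intro s
    have hexp : HasDerivAt (fun s => exp (-k * s)) (exp (-k * s) * -k) s := by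
      simpa using ((hasDerivAt_id s).const_mul (-k)).exp
    refine (((hasDerivAt_const s 1).sub hexp).const_mul (C / k)).congr_deriv ?_
    field_simp
    ring
  have hcomp := image_norm_le_of_norm_deriv_right_le_deriv_boundary (f := fun s => f s - f 0)
    (fun s hs => ((hf s hs.1).sub_const _).continuousAt.continuousWithinAt)
    (fun s hs => ((hf s hs.1).sub_const _).hasDerivWithinAt) (by simp) hB
    (fun s hs => bound s hs.1) ⟨ht, le_rfl⟩
  refine hcomp.trans ?_
  have : 0 ≤ C / k := by positivity
  nlinarith [exp_pos (-k * t)]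

theorem stmt18_general (k : ℝ) (hk : 0 < k) (θi θj : ℝ → ℝ)
    (hode : ∀ t, 0 ≤ t →
      HasDerivAt (fun s => θj s - θi s) (-k * (θj t - θi t)) t) :
    (∀ t, 0 ≤ t → θj t - θi t = (θj 0 - θi 0) * Real.exp (-k * t)) ∧
    (|θj 0 - θi 0| ≤ 2 * Real.pi →
      ∀ pi pj : ℝ → EuclideanSpace ℝ (Fin 2),
        (∀ t, 0 ≤ t → HasDerivAt pi
          (WithLp.toLp 2 (![Real.cos (θi t), Real.sin (θi t)] : Fin 2 → ℝ) :
            EuclideanSpace ℝ (Fin 2)) t) →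
        (∀ t, 0 ≤ t → HasDerivAt pj
          (WithLp.toLp 2 (![Real.cos (θj t), Real.sin (θj t)] : Fin 2 → ℝ) :
            EuclideanSpace ℝ (Fin 2)) t) →
        ∀ t, 0 ≤ t →
          ‖(pi t - pj t) - (pi 0 - pj 0)‖ ≤ 2 * Real.pi / k) := by
  have hdecay : ∀ t, 0 ≤ t → θj t - θi t = (θj 0 - θi 0) * exp (-k * t) := fun t ht => by
    rw [mul_comm]
    exact eq_exp_mul_smul_of_hasDerivAt (f := fun s => θj s - θi s) hode ht
  refine ⟨hdecay, fun hδ₀ pi pj hpi hpj t ht => ?_⟩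
  have hvel : ∀ s, 0 ≤ s → ‖headingVector (θi s) - headingVector (θj s)‖ ≤
      |θj 0 - θi 0| * exp (-k * s) := fun s hs => by
    rw [← abs_of_pos (exp_pos (-k * s)), ← abs_mul, ← hdecay s hs, abs_sub_comm]
    exact norm_headingVector_sub_le _ _
  calc ‖(pi t - pj t) - (pi 0 - pj 0)‖
      ≤ |θj 0 - θi 0| / k := norm_sub_le_of_norm_deriv_le_mul_exp_neg hk
        (fun s hs => (hpi s hs).sub (hpj s hs)) hvel ht
    _ ≤ 2 * π / k := by gcongr

/-- 2D unicycles aligning with a common vector field: if the heading difference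
satisfies `(θ_j − θ_i)′ = −k (θ_j − θ_i)`, then it decays as
`(θ_j(0) − θ_i(0)) e^{−k t}`; moreover, if `|θ_j(0) − θ_i(0)| ≤ 2π` and the robots
move at unit speed along their headings, then
`‖p_{ij}(t) − p_{ij}(0)‖ ≤ 2π/k` for all `t ≥ 0`. -/
theorem stmt18 (k : ℝ) (hk : 0 < k) (θi θj : ℝ → ℝ)
    (hθi : Differentiable ℝ θi) (hθj : Differentiable ℝ θj)
    (hode : ∀ t, 0 ≤ t →
      HasDerivAt (fun s => θj s - θi s) (-k * (θj t - θi t)) t) :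
    (∀ t, 0 ≤ t → θj t - θi t = (θj 0 - θi 0) * Real.exp (-k * t)) ∧
    (|θj 0 - θi 0| ≤ 2 * Real.pi →
      ∀ pi pj : ℝ → EuclideanSpace ℝ (Fin 2),
        (∀ t, 0 ≤ t → HasDerivAt pi
          (WithLp.toLp 2 (![Real.cos (θi t), Real.sin (θi t)] : Fin 2 → ℝ) :
            EuclideanSpace ℝ (Fin 2)) t) →
        (∀ t, 0 ≤ t → HasDerivAt pj
          (WithLp.toLp 2 (![Real.cos (θj t), Real.sin (θj t)] : Fin 2 → ℝ) :
            EuclideanSpace ℝ (Fin 2)) t) →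
        ∀ t, 0 ≤ t →
          ‖(pi t - pj t) - (pi 0 - pj 0)‖ ≤ 2 * Real.pi / k) :=
  stmt18_general k hk θi θj hode
end

section
/- (Geodesic distance on the unit sphere) Let γ : [a, b] → ℝ³ be a C¹ curve lying on the unit sphere, i.e. ‖γ(t)‖ = 1 for all t ∈ [a, b]. Then the length of γ is at least the spherical distance between its endpoints: ∫_a^b ‖γ′(t)‖ dt ≥ arccos( γ(a)ᵀ γ(b) ). -/
/-!
Put `u = γ a` and `φ t = arccos ⟪u, γ t⟫`. Wherever `γ t ≠ ±u`, `φ` is differentiable with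
`φ' ≤ ‖γ'‖`: differentiating `‖γ‖² = 1` gives `γ' ⊥ γ`, so `⟪u, γ'⟫` only sees the component
of `u` orthogonal to `γ t`, whose length is `√(1 - ⟪u, γ t⟫²)`. Integrate this from the last
visit `t₀` of `u` to the next visit `t₁` of `-u` (or to `b` if there is none): `φ t₁ ≤ ∫ ‖γ'‖`,
and `φ b ≤ φ t₁` because either `t₁ = b` or `φ t₁ = π`.
-/

open Real Set MeasureTheory intervalIntegral

variable {E : Type*} [NormedAddCommGroup E] [InnerProductSpace ℝ E]

lemma inner_deriv_eq_zero_of_norm_eq_one {γ : ℝ → E} {v : E} {t : ℝ}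
    (hγ : HasDerivAt γ v t) (hsphere : ∀ᶠ s in nhds t, ‖γ s‖ = 1) :
    inner ℝ (γ t) v = 0 := by
  have hconst : HasDerivAt (fun s => ‖γ s‖ ^ 2) 0 t :=
    (hasDerivAt_const t (1 : ℝ)).congr_of_eventuallyEq
      (hsphere.mono fun s hs => by simp [hs])
  linarith [hγ.norm_sq.unique hconst]

lemma abs_inner_le_sqrt_one_sub_sq_mul_norm {u x v : E} (hu : ‖u‖ = 1) (hx : ‖x‖ = 1)
    (hxv : inner ℝ x v = 0) :
    |inner ℝ u v| ≤ √(1 - inner ℝ u x ^ 2) * ‖v‖ := by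
  have hproj : ‖u - inner ℝ u x • x‖ = √(1 - inner ℝ u x ^ 2) := by
    rw [← sqrt_sq (norm_nonneg _), norm_sub_sq_real, norm_smul, real_inner_smul_right, hu, hx,
      norm_eq_abs, mul_one, sq_abs]
    congr 1
    ring
  have hinner : inner ℝ u v = inner ℝ (u - inner ℝ u x • x) v := by
    rw [inner_sub_left, real_inner_smul_left, hxv, mul_zero, sub_zero]
  rw [hinner, ← hproj]
  exact abs_real_inner_le_norm _ _

lemma exists_hasDerivAt_arccos_inner_le_norm {γ : ℝ → E} {v u : E} {t : ℝ}
    (hγ : HasDerivAt γ v t) (hsphere : ∀ᶠ s in nhds t, ‖γ s‖ = 1) (hu : ‖u‖ = 1)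
    (hne : γ t ≠ u) (hne' : γ t ≠ -u) :
    ∃ D ≤ ‖v‖, HasDerivAt (fun s => arccos (inner ℝ u (γ s))) D t := by
  have hγt : ‖γ t‖ = 1 := hsphere.self_of_nhds
  set p := inner ℝ u (γ t)
  have h1 : p ≠ 1 := fun h => hne ((inner_eq_one_iff_of_norm_eq_one hu hγt).1 h).symm
  have h2 : p ≠ -1 := fun h => hne' <| by
    rw [(inner_eq_neg_one_iff_of_norm_eq_one hu hγt).1 h, neg_neg]
  have hp : |p| < 1 := by
    have := abs_real_inner_le_norm u (γ t)
    rw [hu, hγt, one_mul] at this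
    exact this.lt_of_ne fun h => (abs_eq zero_le_one).1 h |>.elim h1 h2
  have hsqrt : 0 < √(1 - p ^ 2) := sqrt_pos.2 (by nlinarith [sq_abs p, abs_nonneg p])
  have hinner : HasDerivAt (fun s => inner ℝ u (γ s)) (inner ℝ u v) t := by
    simpa using (hasDerivAt_const t u).inner ℝ hγ
  have hcomp := (hasDerivAt_arccos h2 h1).comp t hinner
  refine ⟨_, ?_, hcomp⟩
  have hbound := abs_inner_le_sqrt_one_sub_sq_mul_norm hu hγt
    (inner_deriv_eq_zero_of_norm_eq_one hγ hsphere) (v := v)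
  rw [neg_mul, one_div_mul_eq_div, ← neg_div, div_le_iff₀ hsqrt, mul_comm]
  exact (neg_le_abs _).trans hbound

lemma arccos_inner_sub_le_integral_norm_deriv {γ γ' : ℝ → E} {u : E} {s r : ℝ} (hsr : s ≤ r)
    (hu : ‖u‖ = 1) (hsphere : ∀ t ∈ Ioo s r, ‖γ t‖ = 1) (hcont : ContinuousOn γ (Icc s r))
    (hderiv : ∀ t ∈ Ioo s r, HasDerivAt γ (γ' t) t)
    (hint : IntegrableOn (fun t => ‖γ' t‖) (Icc s r))
    (havoid : ∀ t ∈ Ioo s r, γ t ≠ u ∧ γ t ≠ -u) :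
    arccos (inner ℝ u (γ r)) - arccos (inner ℝ u (γ s)) ≤ ∫ t in s..r, ‖γ' t‖ := by
  have hnear : ∀ t ∈ Ioo s r, ∀ᶠ x in nhds t, ‖γ x‖ = 1 := fun t ht =>
    Filter.eventually_of_mem (Ioo_mem_nhds ht.1 ht.2) hsphere
  choose! D hD hDeriv using fun t ht => exists_hasDerivAt_arccos_inner_le_norm
    (hderiv t ht) (hnear t ht) hu (havoid t ht).1 (havoid t ht).2
  exact sub_le_integral_of_hasDeriv_right_of_le hsr
    (continuous_arccos.comp_continuousOn (continuousOn_const.inner hcont))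
    (fun t ht => (hDeriv t ht).hasDerivWithinAt) hint hD

lemma exists_last_visit_then_first_visit {X : Type*} [TopologicalSpace X] [T1Space X]
    {f : ℝ → X} {a b : ℝ} (hab : a ≤ b) (hf : ContinuousOn f (Icc a b)) (q : X) :
    ∃ t₀ ∈ Icc a b, ∃ t₁ ∈ Icc t₀ b, f t₀ = f a ∧ (f t₁ = q ∨ t₁ = b) ∧
      ∀ t ∈ Ioo t₀ t₁, f t ≠ f a ∧ f t ≠ q := by
  have hvisits : ∀ c ∈ Icc a b, ∀ x : X, IsCompact (Icc c b ∩ f ⁻¹' {x}) := fun c hc x =>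
    isCompact_Icc.of_isClosed_subset
      ((hf.mono (Icc_subset_Icc_left hc.1)).preimage_isClosed_of_isClosed isClosed_Icc
        isClosed_singleton) inter_subset_left
  obtain ⟨t₀, ⟨ht₀, hft₀⟩, hlast⟩ :=
    (hvisits a (left_mem_Icc.2 hab) (f a)).exists_isGreatest ⟨a, left_mem_Icc.2 hab, rfl⟩
  obtain ⟨t₁, ht₁, hfirst⟩ := ((hvisits t₀ ht₀ q).union isCompact_singleton).exists_isLeast
    ⟨b, Or.inr rfl⟩
  have ht₁' : t₁ ∈ Icc t₀ b := by
    rcases ht₁ with ⟨h, -⟩ | rfl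
    · exact h
    · exact right_mem_Icc.2 ht₀.2
  refine ⟨t₀, ht₀, t₁, ht₁', hft₀, ht₁.imp (fun h => h.2) id,
    fun t ht => ⟨fun h => ?_, fun h => ?_⟩⟩
  · exact (hlast ⟨⟨ht₀.1.trans ht.1.le, ht.2.le.trans ht₁'.2⟩, h⟩).not_gt ht.1
  · exact (hfirst (Or.inl ⟨⟨ht.1.le, ht.2.le.trans ht₁'.2⟩, h⟩)).not_gt ht.2

theorem arccos_inner_le_integral_norm_deriv {γ γ' : ℝ → E} {a b : ℝ} (hab : a ≤ b)
    (hsphere : ∀ t ∈ Icc a b, ‖γ t‖ = 1) (hcont : ContinuousOn γ (Icc a b))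
    (hderiv : ∀ t ∈ Ioo a b, HasDerivAt γ (γ' t) t)
    (hint : IntegrableOn (fun t => ‖γ' t‖) (Icc a b)) :
    arccos (inner ℝ (γ a) (γ b)) ≤ ∫ t in a..b, ‖γ' t‖ := by
  obtain ⟨t₀, ht₀, t₁, ht₁, hγt₀, hγt₁, havoid⟩ :=
    exists_last_visit_then_first_visit hab hcont (-γ a)
  have hsub : Icc t₀ t₁ ⊆ Icc a b := Icc_subset_Icc ht₀.1 ht₁.2
  have hsub' : Ioo t₀ t₁ ⊆ Ioo a b := Ioo_subset_Ioo ht₀.1 ht₁.2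
  have hγa : ‖γ a‖ = 1 := hsphere a (left_mem_Icc.2 hab)
  have hpiece := arccos_inner_sub_le_integral_norm_deriv ht₁.1 hγa
    (fun t ht => hsphere t (Ioo_subset_Icc_self (hsub' ht))) (hcont.mono hsub)
    (fun t ht => hderiv t (hsub' ht)) (hint.mono_set hsub) havoid
  have hstart : arccos (inner ℝ (γ a) (γ t₀)) = 0 := by
    rw [hγt₀, real_inner_self_eq_norm_sq, hγa, one_pow, arccos_one]
  have hend : arccos (inner ℝ (γ a) (γ b)) ≤ arccos (inner ℝ (γ a) (γ t₁)) := by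
    rcases hγt₁ with h | rfl
    · rw [h, inner_neg_right, real_inner_self_eq_norm_sq, hγa, one_pow, arccos_neg_one]
      exact arccos_le_pi _
    · exact le_rfl
  have hmono : ∫ t in t₀..t₁, ‖γ' t‖ ≤ ∫ t in a..b, ‖γ' t‖ :=
    intervalIntegral.integral_mono_interval ht₀.1 ht₁.1 ht₁.2
      (Filter.Eventually.of_forall fun t => norm_nonneg _)
      ((intervalIntegrable_iff_integrableOn_Icc_of_le hab).2 hint)
  linarith

/-- Geodesic distance on the unit sphere: a C¹ curve `γ : [a,b] → ℝ³` lying on the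
unit sphere has length at least the spherical distance between its endpoints:
`∫_a^b ‖γ′(t)‖ dt ≥ arccos(γ(a)ᵀ γ(b))`. -/
theorem stmt19 (a b : ℝ) (hab : a ≤ b)
    (γ γ' : ℝ → EuclideanSpace ℝ (Fin 3))
    (hsphere : ∀ t ∈ Set.Icc a b, ‖γ t‖ = 1)
    (hderiv : ∀ t ∈ Set.Icc a b, HasDerivWithinAt γ (γ' t) (Set.Icc a b) t)
    (hcont : ContinuousOn γ' (Set.Icc a b)) :
    Real.arccos (inner ℝ (γ a) (γ b)) ≤ ∫ t in a..b, ‖γ' t‖ :=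
  arccos_inner_le_integral_norm_deriv hab hsphere
    (fun t ht => (hderiv t ht).continuousWithinAt)
    (fun t ht => (hderiv t (Ioo_subset_Icc_self ht)).hasDerivAt (Icc_mem_nhds ht.1 ht.2))
    (hcont.norm.integrableOn_Icc)
end
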